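/- arXiv:1708.09681 — 5 statements merged into one kernel-verified Lean document; each statement's English description precedes it below -/
import Mathlib

section
/- Let S = M(I, G, Λ, P) be a Rees matrix semigroup over a group G with sandwich matrix P : Λ × I → G. Given equivalence relations ρ₁ on I and ρ₂ on Λ and a normal subgroup N of G such that (i,j) ∈ ρ₁ implies p_{λ,i}N = p_{λ,j}N for all λ, and (λ,μ) ∈ ρ₂ implies p_{λ,i}N = p_{μ,i}N for all i, the relation ρ = {((i,g,λ),(j,h,μ)) : i ρ₁ j, λ ρ₂ μ, gN = hN} is a congruence on S. -/
variable {I Λ G : Type*}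

/-- Multiplication of the Rees matrix semigroup `M(I, G, Λ, P)`:
`(i,g,λ)(j,h,μ) = (i, g ⬝ P λ j ⬝ h, μ)`. -/
def reesMul [Group G] (P : Λ → I → G) (a b : I × G × Λ) : I × G × Λ :=
  (a.1, a.2.1 * P a.2.2 b.1 * b.2.1, b.2.2)

/-- Given equivalence relations `ρ₁` on `I`, `ρ₂` on `Λ` and a normal subgroup `N` of `G`
satisfying the linked-coset conditions on the sandwich matrix `P`, the relation
`(i,g,λ) ρ (j,h,μ) ↔ i ρ₁ j ∧ λ ρ₂ μ ∧ gN = hN` is a congruence on the Rees matrix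
semigroup `M(I, G, Λ, P)`. -/
theorem reesMatrix_congruence [Group G] (P : Λ → I → G)
    (ρ₁ : I → I → Prop) (ρ₂ : Λ → Λ → Prop) (N : Subgroup G) [N.Normal]
    (h₁ : Equivalence ρ₁) (h₂ : Equivalence ρ₂)
    (c₁ : ∀ i j : I, ρ₁ i j → ∀ l : Λ, (P l i)⁻¹ * P l j ∈ N)
    (c₂ : ∀ l μ : Λ, ρ₂ l μ → ∀ i : I, (P l i)⁻¹ * P μ i ∈ N) :
    let ρ : (I × G × Λ) → (I × G × Λ) → Prop := fun a b =>
      ρ₁ a.1 b.1 ∧ ρ₂ a.2.2 b.2.2 ∧ a.2.1⁻¹ * b.2.1 ∈ N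
    Equivalence ρ ∧ ∀ a b c : I × G × Λ, ρ a b →
      ρ (reesMul P a c) (reesMul P b c) ∧ ρ (reesMul P c a) (reesMul P c b) := by
  intro ρ
  have hN := ‹N.Normal›
  constructor
  · constructor
    · intro a
      exact ⟨h₁.refl _, h₂.refl _, by simpa using N.one_mem⟩
    · rintro a b ⟨hi, hl, hg⟩
      refine ⟨h₁.symm hi, h₂.symm hl, ?_⟩
      have := N.inv_mem hg
      simpa [mul_inv_rev] using this
    · rintro a b c ⟨hi, hl, hg⟩ ⟨hi', hl', hg'⟩
      refine ⟨h₁.trans hi hi', h₂.trans hl hl', ?_⟩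
      have := N.mul_mem hg hg'
      simpa [mul_assoc] using this
  · rintro ⟨i, g, l⟩ ⟨j, h, m⟩ ⟨k, x, n⟩ ⟨hi, hl, hg⟩
    constructor
    · refine ⟨hi, h₂.refl _, ?_⟩
      show (g * P l k * x)⁻¹ * (h * P m k * x) ∈ N
      have key : (P l k)⁻¹ * g⁻¹ * h * P m k ∈ N := by
        have e1 : (P l k)⁻¹ * (g⁻¹ * h) * P l k ∈ N := hN.conj_mem' _ hg _
        have e2 : (P l k)⁻¹ * P m k ∈ N := c₂ l m hl k
        have := N.mul_mem e1 e2
        simpa [mul_assoc] using this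
      have := hN.conj_mem' _ key x
      simpa [mul_assoc, mul_inv_rev] using this
    · refine ⟨h₁.refl _, hl, ?_⟩
      show (x * P n i * g)⁻¹ * (x * P n j * h) ∈ N
      have e1 : (P n i)⁻¹ * P n j ∈ N := c₁ i j hi n
      have key : g⁻¹ * ((P n i)⁻¹ * P n j) * g ∈ N := hN.conj_mem' _ e1 g
      have := N.mul_mem key hg
      simpa [mul_assoc, mul_inv_rev] using this
end

section
/- In a finite monoid M satisfying x^{ω+1} = x^ω for all x (aperiodicity) and (xy)^ω (yx)^ω (xy)^ω = (xy)^ω for all x, y, the identity ((xy)^ω x)² = (xy)^ω x holds for all x, y. -/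
/-- `e` is the omega power of `x`: an idempotent positive power of `x`. In a finite
monoid such an `e` exists and is unique for each `x`. -/
def IsOmegaPow {M : Type*} [Monoid M] (x e : M) : Prop :=
  (∃ n : ℕ, 0 < n ∧ x ^ n = e) ∧ e * e = e

private lemma pow_shift {M : Type*} [Monoid M] (x y : M) :
    ∀ n : ℕ, x * (y * x) ^ n = (x * y) ^ n * x := by
  intro n
  induction n with
  | zero => simp
  | succ k ih =>
    rw [pow_succ, ← mul_assoc, ih, pow_succ]
    simp [mul_assoc]

private lemma idem_pow {M : Type*} [Monoid M] {e : M} (he : e * e = e) :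
    ∀ n : ℕ, 0 < n → e ^ n = e := by
  intro n hn
  induction n with
  | zero => omega
  | succ k ih =>
    rcases Nat.eq_zero_or_pos k with hk | hk
    · simp [hk]
    · rw [pow_succ, ih hk, he]

/-- In a finite aperiodic monoid (`x^(ω+1) = x^ω`) satisfying
`(xy)^ω (yx)^ω (xy)^ω = (xy)^ω`, the identity `((xy)^ω x)² = (xy)^ω x` holds. -/
theorem DA_identity_of_aperiodic_DS {M : Type*} [Monoid M] [Finite M] (ω : M → M)
    (hω : ∀ x : M, IsOmegaPow x (ω x))
    (ha : ∀ x : M, ω x * x = ω x)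
    (hds : ∀ x y : M, ω (x * y) * ω (y * x) * ω (x * y) = ω (x * y)) :
    ∀ x y : M, (ω (x * y) * x) * (ω (x * y) * x) = ω (x * y) * x := by
  intro x y
  set e := ω (x * y) with he_def
  set f := ω (y * x) with hf_def
  obtain ⟨⟨n, hn, hxy⟩, he⟩ := hω (x * y)
  obtain ⟨⟨m, hm, hyx⟩, hf⟩ := hω (y * x)
  -- common exponent N ≥ 1 with e = (xy)^N, f = (yx)^N
  set N := n * m with hN_def
  have hN : 0 < N := Nat.mul_pos hn hm
  have heN : (x * y) ^ N = e := by
    rw [hN_def, pow_mul, hxy, ← he_def, idem_pow he m hm]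
  have hfN : (y * x) ^ N = f := by
    rw [hN_def, Nat.mul_comm, pow_mul, hyx, ← hf_def, idem_pow hf n hn]
  -- f = y * (xy)^(N-1) * e * x
  have hf2 : f = y * ((x * y) ^ (N - 1) * e) * x := by
    have h2N : f = (y * x) ^ (N + N) := by
      rw [pow_add, hfN, hf]
    have hsplit : N + N = (N - 1 + N) + 1 := by omega
    have : (y * x) ^ (N + N) = y * (x * y) ^ (N - 1 + N) * x := by
      rw [hsplit, pow_succ, pow_shift y x]; simp [mul_assoc]
    rw [h2N, this, pow_add, heN, mul_assoc y]
  -- the two key elements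
  set s := e * (y * (x * y) ^ (N - 1)) with hs_def
  set a := e * x * e with ha_def
  have hea : e * a = a := by rw [ha_def, ← mul_assoc, ← mul_assoc, he]
  have hsa : s * a = e := by
    have := hds x y
    rw [← he_def, ← hf_def] at this
    calc s * a = e * (y * ((x * y) ^ (N - 1) * e) * x) * e := by
          rw [hs_def, ha_def]; simp [mul_assoc]
      _ = e * f * e := by rw [← hf2]
      _ = e := this
  -- e * a^k = a^k for k ≥ 1 (enough: k = j+1)
  have heak : ∀ j : ℕ, e * a ^ (j + 1) = a ^ (j + 1) := by
    intro j
    rw [pow_succ', ← mul_assoc, hea]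
  -- s^(j+1) * a^(j+1) = e for all j
  have hkey : ∀ j : ℕ, s ^ (j + 1) * a ^ (j + 1) = e := by
    intro j
    induction j with
    | zero => simpa using hsa
    | succ k ih =>
      calc s ^ (k + 2) * a ^ (k + 2)
          = s ^ (k + 1) * (s * a) * a ^ (k + 1) := by
            rw [pow_succ, pow_succ']; simp [mul_assoc, pow_succ']
        _ = s ^ (k + 1) * (e * a ^ (k + 1)) := by rw [hsa, mul_assoc]
        _ = s ^ (k + 1) * a ^ (k + 1) := by rw [heak]
        _ = e := ih
  -- aperiodicity: some power of s stabilizes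
  obtain ⟨⟨k, hk, hsk⟩, _⟩ := hω s
  have hstab : s ^ (k + 1) = s ^ k := by
    rw [pow_succ, hsk, ha s]
  -- conclude a = e
  obtain ⟨j, rfl⟩ : ∃ j, k = j + 1 := ⟨k - 1, by omega⟩
  have hae : a = e := by
    calc a = e * a := (hea).symm
      _ = s ^ (j + 1) * a ^ (j + 1) * a := by rw [hkey]
      _ = s ^ (j + 1) * a ^ (j + 2) := by rw [mul_assoc, ← pow_succ]
      _ = s ^ (j + 2) * a ^ (j + 2) := by rw [hstab]
      _ = e := hkey (j + 1)
  -- finish: (e x)(e x) = (e x e) x = e x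
  calc e * x * (e * x) = (e * x * e) * x := by simp [mul_assoc]
    _ = e * x := by rw [← ha_def, hae]
end

section
/- In a finite aperiodic monoid M (satisfying x^{ω+1} = x^ω) satisfying additionally (xy)^ω(yx)^ω(xy)^ω = (xy)^ω, if e = u^ω and e·w·e = e for some w, then e·w²·e = e; and if e·v·e = e = e·w·e then e·v·w·e = e. -/
/-!
If `e x e = e`, then `(e x)ⁿ e = e` for all `n`, so aperiodicity forces `(e x)^ω = e x`, and
likewise `(x e)^ω = x e`. The identity `(xy)^ω (yx)^ω (xy)^ω = (xy)^ω` for the pair `e, x` then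
reads `(e x)(x e)(e x) = e x`; multiplying by `e` on the right and using `e² = e`, `e x e = e`
gives `e x² e = e`.
The second claim is the first one applied to `x = w e v`, since `e (w e v)² e = (ewe) v w (eve)`.
-/

section SandwichClosure

variable {M : Type*} [Monoid M]

lemma pow_mul_eq_of_mul_mul_eq {e x : M} (h : e * x * e = e) (n : ℕ) : (e * x) ^ n * e = e := by
  induction n with
  | zero => rw [pow_zero, one_mul]
  | succ n ih => rw [pow_succ, mul_assoc, h, ih]

lemma mul_pow_eq_of_mul_mul_eq {e x : M} (h : e * x * e = e) (n : ℕ) : e * (x * e) ^ n = e := by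
  induction n with
  | zero => rw [pow_zero, mul_one]
  | succ n ih => rw [pow_succ', ← mul_assoc, ← mul_assoc, h, ih]

lemma mul_omega_eq {ω : M → M} (hω : ∀ x : M, IsOmegaPow x (ω x))
    (ha : ∀ x : M, ω x * x = ω x) (x : M) : x * ω x = ω x := by
  obtain ⟨⟨n, -, hn⟩, -⟩ := hω x
  rw [← hn, ← pow_succ', pow_succ, hn, ha]

lemma omega_mul_eq_of_mul_mul_eq {ω : M → M} (hω : ∀ x : M, IsOmegaPow x (ω x))
    (ha : ∀ x : M, ω x * x = ω x) {e x : M} (h : e * x * e = e) : ω (e * x) = e * x := by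
  obtain ⟨⟨n, -, hn⟩, -⟩ := hω (e * x)
  have hωe : ω (e * x) * e = e := hn ▸ pow_mul_eq_of_mul_mul_eq h n
  rw [← ha (e * x), ← mul_assoc, hωe]

lemma omega_mul_eq_of_mul_mul_eq' {ω : M → M} (hω : ∀ x : M, IsOmegaPow x (ω x))
    (ha : ∀ x : M, ω x * x = ω x) {e x : M} (h : e * x * e = e) : ω (x * e) = x * e := by
  obtain ⟨⟨n, -, hn⟩, -⟩ := hω (x * e)
  have heω : e * ω (x * e) = e := hn ▸ mul_pow_eq_of_mul_mul_eq h n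
  rw [← mul_omega_eq hω ha (x * e), mul_assoc, heω]

lemma mul_mul_self_mul_eq_of_mul_mul_eq {ω : M → M} (hω : ∀ x : M, IsOmegaPow x (ω x))
    (ha : ∀ x : M, ω x * x = ω x)
    (hds : ∀ x y : M, ω (x * y) * ω (y * x) * ω (x * y) = ω (x * y))
    {e x : M} (he : e * e = e) (h : e * x * e = e) : e * (x * x) * e = e := by
  have hex := omega_mul_eq_of_mul_mul_eq hω ha h
  have hxe := omega_mul_eq_of_mul_mul_eq' hω ha h
  have hdsex : e * x * (x * e) * (e * x) = e * x := by simpa only [hex, hxe] using hds e x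
  calc e * (x * x) * e = e * x * (x * e) * e := by simp only [mul_assoc, he]
    _ = e * x * (x * e) * (e * x) * e := by rw [mul_assoc _ (e * x), h]
    _ = e := by rw [hdsex, h]

end SandwichClosure

theorem DA_sandwich_closure_general {M : Type*} [Monoid M] (ω : M → M)
    (hω : ∀ x : M, IsOmegaPow x (ω x))
    (ha : ∀ x : M, ω x * x = ω x)
    (hds : ∀ x y : M, ω (x * y) * ω (y * x) * ω (x * y) = ω (x * y)) :
    ∀ u v w : M,
      (ω u * w * ω u = ω u → ω u * (w * w) * ω u = ω u) ∧
      (ω u * v * ω u = ω u → ω u * w * ω u = ω u → ω u * (v * w) * ω u = ω u) := by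
  intro u v w
  set e := ω u
  have he : e * e = e := (hω u).2
  refine ⟨mul_mul_self_mul_eq_of_mul_mul_eq hω ha hds he, fun hv hw => ?_⟩
  have hwev : e * (w * e * v) * e = e := by
    calc e * (w * e * v) * e = e * w * e * v * e := by simp only [mul_assoc]
      _ = e := by rw [hw, hv]
  have hsq := mul_mul_self_mul_eq_of_mul_mul_eq hω ha hds he hwev
  calc e * (v * w) * e = e * w * e * v * w * (e * v * e) := by rw [hw, hv]; simp only [mul_assoc]
    _ = e := by simpa only [mul_assoc] using hsq

/-- In a finite aperiodic monoid satisfying `(xy)^ω (yx)^ω (xy)^ω = (xy)^ω`, with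
`e = u^ω`: if `ewe = e` then `ew²e = e`, and if `eve = e = ewe` then `evwe = e`. -/
theorem DA_sandwich_closure {M : Type*} [Monoid M] [Finite M] (ω : M → M)
    (hω : ∀ x : M, IsOmegaPow x (ω x))
    (ha : ∀ x : M, ω x * x = ω x)
    (hds : ∀ x y : M, ω (x * y) * ω (y * x) * ω (x * y) = ω (x * y)) :
    ∀ u v w : M,
      (ω u * w * ω u = ω u → ω u * (w * w) * ω u = ω u) ∧
      (ω u * v * ω u = ω u → ω u * w * ω u = ω u → ω u * (v * w) * ω u = ω u) :=
  DA_sandwich_closure_general ω hω ha hds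
end

section
/- In a finite monoid M satisfying x^{ω+1} = x^ω and (xy)^ω = (yx)^ω for all x, y, the identity (xy)^ω = (x^ω y^ω)^ω holds for all x, y. -/
private lemma aux_mul_pow_mul {M : Type*} [Monoid M] (a b : M) (n : ℕ) :
    a * (b * a) ^ n = (a * b) ^ n * a := by
  induction n with
  | zero => simp
  | succ k ih =>
    rw [pow_succ, pow_succ, ← mul_assoc, ih]
    simp only [mul_assoc]

/-- In a finite monoid satisfying `x^(ω+1) = x^ω` and `(xy)^ω = (yx)^ω`, the identity
`(xy)^ω = (x^ω y^ω)^ω` holds. -/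
theorem J_omega_identity {M : Type*} [Monoid M] [Finite M] (ω : M → M)
    (hω : ∀ x : M, IsOmegaPow x (ω x))
    (ha : ∀ x : M, x * ω x = ω x)
    (hc : ∀ x y : M, ω (x * y) = ω (y * x)) :
    ∀ x y : M, ω (x * y) = ω (ω x * ω y) := by
  have hid : ∀ z : M, ω z * ω z = ω z := fun z => (hω z).2
  -- right absorption: ω z * z = ω z
  have hrz : ∀ z : M, ω z * z = ω z := by
    intro z
    obtain ⟨k, hk0, hzk⟩ := (hω z).1
    calc ω z * z = z ^ k * z := by rw [hzk]
      _ = z * z ^ k := by rw [← pow_succ, pow_succ']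
      _ = z * ω z := by rw [hzk]
      _ = ω z := ha z
  -- stabilization
  have hstab : ∀ (z : M) (k j : ℕ), z ^ k = ω z → z ^ (k + j) = ω z := by
    intro z k j hzk
    induction j with
    | zero => simpa using hzk
    | succ i ih => rw [← Nat.add_assoc, pow_succ, ih, hrz]
  -- uniform exponent
  obtain ⟨n, hn0, hN⟩ : ∃ n : ℕ, 0 < n ∧ ∀ (z : M) (m : ℕ), n ≤ m → z ^ m = ω z := by
    choose k hk0 hkz using fun z => (hω z).1
    cases nonempty_fintype M
    refine ⟨(Finset.univ.sup k) + 1, Nat.succ_pos _, ?_⟩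
    intro z m hm
    have hkm : k z ≤ m :=
      le_trans (le_trans (Finset.le_sup (Finset.mem_univ z)) (Nat.le_succ _)) hm
    obtain ⟨j, rfl⟩ := Nat.exists_eq_add_of_le hkm
    exact hstab z (k z) j (hkz z)
  -- uniqueness of the idempotent power
  have huniq : ∀ (z : M) (m : ℕ), 0 < m → z ^ m * z ^ m = z ^ m → z ^ m = ω z := by
    intro z m hm hi
    have hp : ∀ j, (z ^ m) ^ (j + 1) = z ^ m := by
      intro j
      induction j with
      | zero => simp
      | succ i ih => rw [pow_succ, ih, hi]
    have h1 : (z ^ m) ^ n = z ^ m := by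
      obtain ⟨j, rfl⟩ : ∃ j, n = j + 1 := ⟨n - 1, by omega⟩
      exact hp j
    have h2 : z ^ (m * n) = ω z := hN z (m * n) (Nat.le_mul_of_pos_left n hm)
    rw [← h1, ← pow_mul, h2]
  -- Simon's identity: ω(ab) absorbs a on both sides
  have hsim : ∀ a b : M, ω (a * b) * a = ω (a * b) ∧ a * ω (a * b) = ω (a * b) := by
    intro a b
    have hcomm : a * ω (a * b) = ω (a * b) * a := by
      calc a * ω (a * b) = a * ω (b * a) := by rw [hc a b]
        _ = a * (b * a) ^ n := by rw [hN (b * a) n le_rfl]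
        _ = (a * b) ^ n * a := aux_mul_pow_mul a b n
        _ = ω (a * b) * a := by rw [hN (a * b) n le_rfl]
    have hbga : b * ω (a * b) * a = ω (a * b) := by
      calc b * ω (a * b) * a = b * (a * b) ^ n * a := by rw [hN (a * b) n le_rfl]
        _ = (b * a) ^ n * b * a := by rw [aux_mul_pow_mul b a n]
        _ = (b * a) ^ n * (b * a) := by rw [mul_assoc]
        _ = (b * a) ^ (n + 1) := (pow_succ (b * a) n).symm
        _ = ω (b * a) := hN (b * a) (n + 1) (Nat.le_succ n)
        _ = ω (a * b) := (hc a b).symm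
    have hbkgak : ∀ k : ℕ, b ^ k * ω (a * b) * a ^ k = ω (a * b) := by
      intro k
      induction k with
      | zero => simp
      | succ i ih =>
        calc b ^ (i + 1) * ω (a * b) * a ^ (i + 1)
            = b ^ i * (b * ω (a * b) * a) * a ^ i := by
              rw [pow_succ, pow_succ']; simp only [mul_assoc]
          _ = b ^ i * ω (a * b) * a ^ i := by rw [hbga]
          _ = ω (a * b) := ih
    have hgan : ω (a * b) * a ^ n = ω (a * b) := by
      have h2 : a ^ n * a ^ n = a ^ n := by rw [hN a n le_rfl]; exact hid a
      calc ω (a * b) * a ^ n = b ^ n * ω (a * b) * a ^ n * a ^ n := by rw [hbkgak n]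
        _ = b ^ n * ω (a * b) * (a ^ n * a ^ n) := by rw [mul_assoc]
        _ = b ^ n * ω (a * b) * a ^ n := by rw [h2]
        _ = ω (a * b) := hbkgak n
    have hca : Commute a (ω (a * b)) := hcomm
    have hpow1 : ∀ k : ℕ, (ω (a * b) * a) ^ (k + 1) = ω (a * b) * a ^ (k + 1) := by
      intro k
      induction k with
      | zero => simp
      | succ i ih =>
        calc (ω (a * b) * a) ^ (i + 1 + 1)
            = (ω (a * b) * a) ^ (i + 1) * (ω (a * b) * a) := pow_succ _ _
          _ = ω (a * b) * a ^ (i + 1) * (ω (a * b) * a) := by rw [ih]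
          _ = ω (a * b) * (a ^ (i + 1) * ω (a * b)) * a := by simp only [mul_assoc]
          _ = ω (a * b) * (ω (a * b) * a ^ (i + 1)) * a := by
              rw [(hca.pow_left (i + 1)).eq]
          _ = ω (a * b) * ω (a * b) * (a ^ (i + 1) * a) := by simp only [mul_assoc]
          _ = ω (a * b) * a ^ (i + 1 + 1) := by rw [hid, ← pow_succ]
    have hpown : (ω (a * b) * a) ^ n = ω (a * b) := by
      obtain ⟨m, rfl⟩ : ∃ m, n = m + 1 := ⟨n - 1, by omega⟩
      rw [hpow1 m]
      exact hgan
    have homega : (ω (a * b) * a) ^ n = ω (ω (a * b) * a) := by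
      refine huniq _ n hn0 ?_
      rw [hpown]; exact hid _
    have hgag : ω (a * b) * a * ω (a * b) = ω (a * b) := by
      have h := ha (ω (a * b) * a)
      rw [← homega, hpown] at h
      exact h
    have hga : ω (a * b) * a = ω (a * b) := by
      have h2 : ω (a * b) * a * ω (a * b) = ω (a * b) * a := by
        calc ω (a * b) * a * ω (a * b) = ω (a * b) * (a * ω (a * b)) := mul_assoc _ _ _
          _ = ω (a * b) * (ω (a * b) * a) := by rw [hcomm]
          _ = ω (a * b) * ω (a * b) * a := (mul_assoc _ _ _).symm
          _ = ω (a * b) * a := by rw [hid]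
      exact h2.symm.trans hgag
    exact ⟨hga, hcomm.trans hga⟩
  -- main proof
  intro x y
  have gx : ω (x * y) * x = ω (x * y) := (hsim x y).1
  have gy : ω (x * y) * y = ω (x * y) := by
    have h := (hsim y x).1
    rw [← hc x y] at h
    exact h
  -- ω(ωx * ωy) left-absorbs x and y
  have hef : x * (x ^ (n - 1) * y ^ n) = ω x * ω y := by
    rw [← mul_assoc, ← pow_succ', show n - 1 + 1 = n by omega, hN x n le_rfl,
      hN y n le_rfl]
  have hfe : y * (y ^ (n - 1) * x ^ n) = ω y * ω x := by
    rw [← mul_assoc, ← pow_succ', show n - 1 + 1 = n by omega, hN y n le_rfl,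
      hN x n le_rfl]
  have hx : x * ω (ω x * ω y) = ω (ω x * ω y) := by
    rw [← hef]
    exact (hsim x (x ^ (n - 1) * y ^ n)).2
  have hy : y * ω (ω x * ω y) = ω (ω x * ω y) := by
    rw [hc (ω x) (ω y), ← hfe]
    exact (hsim y (y ^ (n - 1) * x ^ n)).2
  -- g * h = g
  have gpowx : ∀ k : ℕ, ω (x * y) * x ^ k = ω (x * y) := by
    intro k
    induction k with
    | zero => simp
    | succ i ih => rw [pow_succ, ← mul_assoc, ih, gx]
  have gpowy : ∀ k : ℕ, ω (x * y) * y ^ k = ω (x * y) := by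
    intro k
    induction k with
    | zero => simp
    | succ i ih => rw [pow_succ, ← mul_assoc, ih, gy]
  have gef : ω (x * y) * (ω x * ω y) = ω (x * y) := by
    rw [← hN x n le_rfl, ← hN y n le_rfl, ← mul_assoc, gpowx n, gpowy n]
  have gefpow : ∀ k : ℕ, ω (x * y) * (ω x * ω y) ^ k = ω (x * y) := by
    intro k
    induction k with
    | zero => simp
    | succ i ih => rw [pow_succ, ← mul_assoc, ih, gef]
  have gh : ω (x * y) * ω (ω x * ω y) = ω (x * y) := by
    rw [← hN (ω x * ω y) n le_rfl]
    exact gefpow n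
  -- g * h = h
  have xyh : (x * y) * ω (ω x * ω y) = ω (ω x * ω y) := by
    rw [mul_assoc, hy, hx]
  have xyhpow : ∀ k : ℕ, (x * y) ^ k * ω (ω x * ω y) = ω (ω x * ω y) := by
    intro k
    induction k with
    | zero => simp
    | succ i ih => rw [pow_succ, mul_assoc, xyh, ih]
  have hg2 : ω (x * y) * ω (ω x * ω y) = ω (ω x * ω y) := by
    rw [← hN (x * y) n le_rfl]
    exact xyhpow n
  exact gh.symm.trans hg2
end

section
/- In a finite semigroup S satisfying x^{ω+1} = x for all x (complete regularity) and x^ω y x^ω z x^ω = x^ω z x^ω y x^ω and x^ω y x^ω y x^ω = x^ω y x^ω for all x, y, z, the identity (x y^ω z)^ω = (x y^ω z)² holds. -/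
/-- `ppow s n` is the power `s^(n+1)` in a semigroup. -/
def ppow {S : Type*} [Semigroup S] (s : S) : ℕ → S
  | 0 => s
  | n + 1 => ppow s n * s

/-- `e` is the omega power of `x` in a semigroup: an idempotent power of `x`. -/
def IsOmegaPowS {S : Type*} [Semigroup S] (x e : S) : Prop :=
  (∃ n : ℕ, ppow x n = e) ∧ e * e = e

/-- In a finite semigroup satisfying `x^(ω+1) = x` (complete regularity) and the
local-semilattice identities `x^ω y x^ω z x^ω = x^ω z x^ω y x^ω` and
`x^ω y x^ω y x^ω = x^ω y x^ω`, the identity `(x y^ω z)^ω = (x y^ω z)²` holds. -/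
theorem LSl_identity {S : Type*} [Semigroup S] [Finite S] (ω : S → S)
    (hω : ∀ x : S, IsOmegaPowS x (ω x))
    (hcr : ∀ x : S, ω x * x = x)
    (hc : ∀ x y z : S, ω x * y * ω x * z * ω x = ω x * z * ω x * y * ω x)
    (hi : ∀ x y : S, ω x * y * ω x * y * ω x = ω x * y * ω x) :
    ∀ x y z : S, ω (x * ω y * z) = (x * ω y * z) * (x * ω y * z) := by
  intro x y z
  set e := ω y with he
  have hee : e * e = e := (hω y).2
  set u := x * e * z with hu
  -- hi in right-associated form, with a trailing factor
  have hi' : ∀ w : S, e * ((z * x) * (e * ((z * x) * (e * w)))) = e * ((z * x) * (e * w)) := by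
    intro w
    have h := hi y (z * x)
    rw [← he] at h
    calc e * ((z * x) * (e * ((z * x) * (e * w))))
        = (e * (z * x) * e * (z * x) * e) * w := by simp [mul_assoc]
      _ = (e * (z * x) * e) * w := by rw [h]
      _ = e * ((z * x) * (e * w)) := by simp [mul_assoc]
  have h3 : u * u * u = u * u := by
    rw [hu]
    calc (x * e * z) * (x * e * z) * (x * e * z)
        = x * (e * ((z * x) * (e * ((z * x) * (e * z))))) := by simp [mul_assoc]
      _ = x * (e * ((z * x) * (e * z))) := by rw [hi']
      _ = (x * e * z) * (x * e * z) := by simp [mul_assoc]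
  have hpow : ∀ n : ℕ, ppow u (n + 1) = u * u := by
    intro n
    induction n with
    | zero => rfl
    | succ m ih => rw [ppow, ih, h3]
  obtain ⟨n, hn⟩ := (hω u).1
  have hid : ω u * ω u = ω u := (hω u).2
  cases n with
  | zero =>
      -- ppow u 0 = u, so u = ω u, and ω u is idempotent
      have huu : u = ω u := hn
      rw [← huu] at hid ⊢
      exact hid.symm
  | succ m =>
      rw [hpow m] at hn
      exact hn.symm
end
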